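/- As t → 0 from the right, Σ_{k=0}^∞ (k+1)²·e^{−kt} − ( 2·t^{−3} + 2·t^{−2} + t^{−1} ) = O(1). In particular, the first three Steklov heat invariants of the unit ball in ℝ⁴ are a₀ = 2, a₁ = 2, a₂ = 1. -/

import Mathlib

/-!
Summing the series gives `∑ (k+1)² xᵏ = (1 + x)/(1 - x)³` at `x = e^{-t}`. With
`w(t) = (1 - e^{-t})/t = 1 - t/2 + t²/6 + O(t³)` the heat trace becomes
`t⁻³ (2 - t w)/w³`, and substituting the cubic Taylor polynomial of `w` into
`(2 - t w)/w³` reproduces `2 + 2t + t²` up to `O(t³)`.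
-/

open Real Asymptotics Filter Topology

theorem hasSum_add_one_sq_mul_geometric_of_norm_lt_one {𝕜 : Type*} [NormedField 𝕜] {r : 𝕜}
    (hr : ‖r‖ < 1) :
    HasSum (fun n : ℕ ↦ ((n : 𝕜) + 1) ^ 2 * r ^ n) ((1 + r) / (1 - r) ^ 3) := by
  have hr' : 1 - r ≠ 0 := sub_ne_zero.2 fun h ↦ by simp [← h] at hr
  have h := ((hasSum_choose_mul_geometric_of_norm_lt_one 2 hr).mul_left 2).sub
    (hasSum_choose_mul_geometric_of_norm_lt_one 1 hr)
  rw [show 2 * (1 / (1 - r) ^ (2 + 1)) - 1 / (1 - r) ^ (1 + 1) = (1 + r) / (1 - r) ^ 3 by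
    field_simp; ring] at h
  refine h.congr_fun fun n ↦ ?_
  have hchoose : ((n + 2).choose 2 : 𝕜) * 2 = (n + 2) * (n + 1) := by
    simpa [add_assoc, one_add_one_eq_two] using
      congrArg (Nat.cast : ℕ → 𝕜) (Nat.add_one_mul_choose_eq (n + 1) 1).symm
  rw [Nat.choose_one_right]
  push_cast
  linear_combination (-r ^ n) * hchoose

theorem hasSum_add_one_sq_mul_exp_neg_mul {t : ℝ} (ht : 0 < t) :
    HasSum (fun k : ℕ ↦ ((k : ℝ) + 1) ^ 2 * exp (-k * t))
      ((1 + exp (-t)) / (1 - exp (-t)) ^ 3) := by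
  have hr : ‖exp (-t)‖ < 1 := by simpa using ht
  simpa [← exp_nat_mul] using hasSum_add_one_sq_mul_geometric_of_norm_lt_one hr

theorem one_sub_exp_neg_div_self_sub_isBigO :
    (fun t : ℝ ↦ (1 - exp (-t)) / t - (1 - t / 2 + t ^ 2 / 6)) =O[𝓝[≠] 0] (· ^ 3) := by
  have hexp : (fun t : ℝ ↦ 1 - exp (-t) - (t - t ^ 2 / 2 + t ^ 3 / 6)) =O[𝓝 0] (· ^ 4) := by
    refine ((exp_sub_sum_range_isBigO_pow 4).comp_tendsto
      (continuous_neg.tendsto' (0 : ℝ) 0 neg_zero)).neg_left.congr (fun t ↦ ?_) (fun t ↦ ?_)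
    · simp [Finset.sum_range_succ, Nat.factorial]
      ring
    · simp [Even.neg_pow (by decide : Even 4)]
  refine ((hexp.mono nhdsWithin_le_nhds).mul (isBigO_refl (fun t : ℝ ↦ t⁻¹) _)).congr' ?_ ?_
  · filter_upwards [self_mem_nhdsWithin] with t (ht : t ≠ 0)
    field_simp
  · filter_upwards [self_mem_nhdsWithin] with t (ht : t ≠ 0)
    field_simp

theorem two_sub_mul_div_cube_sub_isBigO {l : Filter ℝ} (hl : l ≤ 𝓝 0) {w : ℝ → ℝ}
    (hw : (fun t ↦ w t - (1 - t / 2 + t ^ 2 / 6)) =O[l] (· ^ 3)) :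
    (fun t ↦ (2 - t * w t) / w t ^ 3 - (2 + 2 * t + t ^ 2)) =O[l] (· ^ 3) := by
  have hid : Tendsto (fun t : ℝ ↦ t) l (𝓝 0) := hl
  have hp : Tendsto (fun t : ℝ ↦ 1 - t / 2 + t ^ 2 / 6) l (𝓝 1) := by
    simpa using (tendsto_const_nhds.sub (hid.div_const 2)).add ((hid.pow 2).div_const 6)
  have hw1 : Tendsto w l (𝓝 1) := by
    simpa using (hw.trans_tendsto (by simpa using hid.pow 3)).add hp
  have hP : (fun t : ℝ ↦ 1 / 12 - 5 / 12 * t + 7 / 24 * t ^ 2 - 29 / 216 * t ^ 3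
      + 7 / 216 * t ^ 4 - 1 / 216 * t ^ 5) =O[l] fun _ ↦ (1 : ℝ) :=
    ((Continuous.tendsto (by fun_prop) 0).mono_left hl).isBigO_one ℝ
  have hK : (fun t ↦ t + (2 + 2 * t + t ^ 2) * (w t ^ 2 + w t * (1 - t / 2 + t ^ 2 / 6)
      + (1 - t / 2 + t ^ 2 / 6) ^ 2)) =O[l] fun _ ↦ (1 : ℝ) :=
    (hid.add (((tendsto_const_nhds.add (hid.const_mul 2)).add (hid.pow 2)).mul
      (((hw1.pow 2).add (hw1.mul hp)).add (hp.pow 2)))).isBigO_one ℝ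
  -- With `p` the Taylor polynomial, `2 - t p - (2 + 2t + t²) p³ = t³ P(t)` for the quintic `P`
  -- of `hP`, and the numerator differs from this by `w - p` times the bounded factor of `hK`.
  have hnum : (fun t ↦ 2 - t * w t - (2 + 2 * t + t ^ 2) * w t ^ 3) =O[l] (· ^ 3) := by
    refine (((isBigO_refl (· ^ 3) l).mul hP).sub (hw.mul hK)).congr (fun t ↦ ?_) (fun t ↦ ?_)
    · ring
    · simp
  have hinv : (fun t ↦ (w t ^ 3)⁻¹) =O[l] fun _ ↦ (1 : ℝ) := by
    simpa using ((hw1.pow 3).inv₀ (by norm_num)).isBigO_one ℝ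
  refine (hnum.mul hinv).congr' ?_ (by simp)
  filter_upwards [hw1.eventually_ne one_ne_zero] with t ht
  field_simp

/-- Heat trace asymptotics for the unit ball in `ℝ⁴`: as `t → 0⁺`,
`Σ_{k=0}^∞ (k+1)² e^{-kt} = 2t⁻³ + 2t⁻² + t⁻¹ + O(1)`, giving the Steklov heat invariants
`a₀ = 2`, `a₁ = 2`, `a₂ = 1`. -/
theorem heat_trace_ball_four_asymptotics :
    (fun t : ℝ => (∑' k : ℕ, ((k : ℝ) + 1) ^ 2 * Real.exp (-(k : ℝ) * t))
        - (2 / t ^ 3 + 2 / t ^ 2 + 1 / t))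
      =O[nhdsWithin (0 : ℝ) (Set.Ioi 0)] fun _ => (1 : ℝ) := by
  have hw := two_sub_mul_div_cube_sub_isBigO nhdsWithin_le_nhds
    (one_sub_exp_neg_div_self_sub_isBigO.mono (nhdsWithin_mono 0 fun t ht ↦ ne_of_gt ht))
  refine ((isBigO_refl (fun t : ℝ ↦ t⁻¹ ^ 3) _).mul hw).congr' ?_ ?_
  · filter_upwards [self_mem_nhdsWithin] with t (ht : 0 < t)
    rw [(hasSum_add_one_sq_mul_exp_neg_mul ht).tsum_eq]
    field_simp
    ring
  · filter_upwards [self_mem_nhdsWithin] with t (ht : 0 < t)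
    field_simp
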